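/- arXiv:2405.09859 — 2 statements merged into one kernel-verified Lean document; each statement's English description precedes it below -/
import Mathlib

section
/- Fix δ ∈ (0,1) and 0 < L ≤ U with θ = U/L, and let n = max{1, ⌈1/δ⌉ − 1}. Let r be the unique positive solution of (r−1)·(1 + r/n)^n = θ − 1. Then every random threshold algorithm μ for one-max search satisfies α_δ^μ ≥ r; that is, the optimal δ-CVaR competitive ratio satisfies α_δ^{θ,*} ≥ r. In particular, α_δ^{θ,*} ≥ √θ whenever δ ≥ 1/2. -/
/-!
Suppose `v < r · CVaR_δ[P(X, v)]` for every price `v ∈ [L, U]` and put `l = (1 - δ) / n`, so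
that `(i + 1) l ≤ δ + i l` because `(n + 1) δ ≥ 1`. By weak duality `CVaR_δ[Y] ≤ E[ρ Y]` for
every density `0 ≤ ρ ≤ (1 - δ)⁻¹`. If the CDF `F` of `X` satisfies `F(b_i) ≥ (i + 1) l` at
thresholds `b_0 ≤ ⋯ ≤ b_{k-1} ≤ v`, mass `k l` can be collected below `v` in layers of mass `l`,
the `i`-th one at prices `≤ b_i`. Charging it at the full rate `(1 - δ)⁻¹` and spreading the rest
of the density over `{X > v}`, where the profit is `L`, gives
`CVaR_δ[P(X, v)] ≤ L (1 - k/n) + (b_0 + ⋯ + b_{k-1}) / n` whenever `F(v) ≤ δ + k l`.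
For `b_k = L + (r - 1) L (1 + r/n)^k` this bound is exactly `b_k / r`, so `F(b_k) < δ + k l`
would give `b_k < b_k`. Hence `F(b_k) ≥ δ + k l` whenever `b_k ≤ U`, and the bound at `v = U`,
`k = n` yields `U < b_n`, i.e. `θ - 1 < (r - 1) (1 + r/n)^n`, contradicting the choice of `r`.
-/

open MeasureTheory Set

/-- Reward conditional value-at-risk of `f` under measure `μ` at level `δ ∈ [0,1)`:
`CVaR_δ[Y] = sup_t { t - (1-δ)⁻¹ E[max(t - Y, 0)] }`. -/
noncomputable def rcvar (δ : ℝ) (μ : Measure ℝ) (f : ℝ → ℝ) : ℝ :=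
  ⨆ t : ℝ, t - (1 - δ)⁻¹ * ∫ x, max (t - f x) 0 ∂μ

/-- One-max search profit of a random threshold `x` when the maximum price is `v`
and the lower price bound is `L`. -/
noncomputable def omsProfit (L v x : ℝ) : ℝ := if x ≤ v then x else L

/-- `δ`-CVaR competitive ratio of the random-threshold strategy `μ` at maximal price `v`. -/
noncomputable def omsRatio (δ L : ℝ) (μ : Measure ℝ) (v : ℝ) : ℝ :=
  v / rcvar δ μ (fun x => omsProfit L v x)

/-- `δ`-CVaR competitive ratio of the random-threshold strategy `μ` for one-max search
with price bounds `L ≤ U`. -/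
noncomputable def omsCR (δ L U : ℝ) (μ : Measure ℝ) : ℝ :=
  ⨆ v : Icc L U, omsRatio δ L μ (v : ℝ)

/-- CDF of the law `μ`. -/
noncomputable def cdfR (μ : Measure ℝ) (x : ℝ) : ℝ := (μ (Iic x)).toReal

/-- Inverse CDF of a law `μ` supported in `[a,b]`: `F⁻¹(p) = inf {x ∈ [a,b] : F(x) ≥ p}`. -/
noncomputable def invCdf (a b : ℝ) (μ : Measure ℝ) (p : ℝ) : ℝ :=
  sInf {x | x ∈ Icc a b ∧ p ≤ cdfR μ x}

/-- Optimal `δ`-CVaR competitive ratio for one-max search over all random-threshold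
strategies supported in `[L,U]`. -/
noncomputable def omsOpt (δ L U : ℝ) : ℝ :=
  ⨅ μ : {m : Measure ℝ // IsProbabilityMeasure m ∧ m (Icc L U)ᶜ = 0},
    omsCR δ L U (μ : Measure ℝ)

section CVaR
variable {μ : Measure ℝ} {δ : ℝ} {f : ℝ → ℝ}

theorem sub_mul_integral_max_le_integral_mul [IsFiniteMeasure μ] (hf : Integrable f μ)
    {ρ : ℝ → ℝ} (hρ : Measurable ρ) (hρ0 : ∀ x, 0 ≤ ρ x) (hρδ : ∀ x, ρ x ≤ (1 - δ)⁻¹)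
    (hρ1 : ∫ x, ρ x ∂μ = 1) (t : ℝ) :
    t - (1 - δ)⁻¹ * ∫ x, max (t - f x) 0 ∂μ ≤ ∫ x, ρ x * f x ∂μ := by
  have hρb : ∀ᵐ x ∂μ, ‖ρ x‖ ≤ (1 - δ)⁻¹ :=
    ae_of_all _ fun x => (Real.norm_of_nonneg (hρ0 x)).trans_le (hρδ x)
  have hρf : Integrable (fun x => ρ x * f x) μ := hf.bdd_mul hρ.aestronglyMeasurable hρb
  have hρt : Integrable (fun x => ρ x * t) μ :=
    (integrable_const t).bdd_mul hρ.aestronglyMeasurable hρb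
  have hpos : Integrable (fun x => max (t - f x) 0) μ := ((integrable_const t).sub hf).pos_part
  have hmono : ∫ x, ρ x * (t - f x) ∂μ ≤ (1 - δ)⁻¹ * ∫ x, max (t - f x) 0 ∂μ := by
    rw [← integral_const_mul]
    refine integral_mono (by simp only [mul_sub]; exact hρt.sub hρf) (hpos.const_mul _) fun x => ?_
    calc ρ x * (t - f x) ≤ ρ x * max (t - f x) 0 :=
          mul_le_mul_of_nonneg_left (le_max_left _ _) (hρ0 x)
      _ ≤ (1 - δ)⁻¹ * max (t - f x) 0 := mul_le_mul_of_nonneg_right (hρδ x) (le_max_right _ _)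
  have hlin : ∫ x, ρ x * (t - f x) ∂μ = t - ∫ x, ρ x * f x ∂μ := by
    simp only [mul_sub]
    rw [integral_sub hρt hρf, integral_mul_const, hρ1, one_mul]
  linarith

theorem rcvar_le_integral_mul [IsFiniteMeasure μ] (hf : Integrable f μ)
    {ρ : ℝ → ℝ} (hρ : Measurable ρ) (hρ0 : ∀ x, 0 ≤ ρ x) (hρδ : ∀ x, ρ x ≤ (1 - δ)⁻¹)
    (hρ1 : ∫ x, ρ x ∂μ = 1) :
    rcvar δ μ f ≤ ∫ x, ρ x * f x ∂μ :=
  ciSup_le (sub_mul_integral_max_le_integral_mul hf hρ hρ0 hρδ hρ1)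

theorem le_rcvar_of_ae_le [IsProbabilityMeasure μ] (hδ0 : 0 ≤ δ) (hδ1 : δ < 1)
    (hf : Integrable f μ) {a : ℝ} (ha : ∀ᵐ x ∂μ, a ≤ f x) : a ≤ rcvar δ μ f := by
  have h1δ : 1 ≤ (1 - δ)⁻¹ := one_le_inv₀ (by linarith) |>.2 (by linarith)
  have hbdd : BddAbove (range fun t => t - (1 - δ)⁻¹ * ∫ x, max (t - f x) 0 ∂μ) :=
    ⟨_, forall_mem_range.2 (sub_mul_integral_max_le_integral_mul hf measurable_const
      (fun _ => zero_le_one) (fun _ => h1δ) (by simp))⟩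
  have hzero : ∫ x, max (a - f x) 0 ∂μ = 0 := by
    refine integral_eq_zero_of_ae ?_
    filter_upwards [ha] with x hx using max_eq_right (by linarith)
  refine le_trans ?_ (le_ciSup hbdd a)
  simp [hzero]
end CVaR

section Weights
variable {μ : Measure ℝ}

def IsWeightBelow (p : ℝ) (η : ℝ → ℝ) : Prop :=
  Measurable η ∧ 0 ≤ η ∧ η ≤ (Iic p).indicator 1

theorem IsWeightBelow.mono {p q : ℝ} {η : ℝ → ℝ} (hη : IsWeightBelow p η) (hpq : p ≤ q) :
    IsWeightBelow q η :=
  ⟨hη.1, hη.2.1, hη.2.2.trans (indicator_le_indicator_of_subset (Iic_subset_Iic.2 hpq)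
    fun _ => zero_le_one)⟩

theorem IsWeightBelow.le_one {p : ℝ} {η : ℝ → ℝ} (hη : IsWeightBelow p η) (x : ℝ) : η x ≤ 1 :=
  (hη.2.2 x).trans (indicator_le_self' (fun _ _ => zero_le_one) x)

theorem IsWeightBelow.eq_zero_of_lt {p : ℝ} {η : ℝ → ℝ} (hη : IsWeightBelow p η) {x : ℝ}
    (hx : p < x) : η x = 0 :=
  le_antisymm ((hη.2.2 x).trans_eq (indicator_of_notMem (show x ∉ Iic p from not_le.2 hx) _))
    (hη.2.1 x)

theorem IsWeightBelow.integrable [IsFiniteMeasure μ] {p : ℝ} {η : ℝ → ℝ}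
    (hη : IsWeightBelow p η) : Integrable η μ :=
  (integrable_const (1 : ℝ)).mono' hη.1.aestronglyMeasurable (ae_of_all _ fun x => by
    rw [Real.norm_of_nonneg (hη.2.1 x)]
    exact hη.le_one x)

theorem IsWeightBelow.integrable_mul_id {p : ℝ} {η : ℝ → ℝ} (hη : IsWeightBelow p η)
    (hid : Integrable (fun x => x) μ) : Integrable (fun x => η x * x) μ :=
  hid.bdd_mul hη.1.aestronglyMeasurable (ae_of_all _ fun x => by
    rw [Real.norm_of_nonneg (hη.2.1 x)]
    exact hη.le_one x)

theorem isWeightBelow_indicator (p : ℝ) : IsWeightBelow p ((Iic p).indicator 1) :=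
  ⟨measurable_one.indicator measurableSet_Iic, indicator_nonneg (fun _ _ => zero_le_one), le_rfl⟩

theorem IsWeightBelow.lineMap {p t : ℝ} {η ζ : ℝ → ℝ} (hη : IsWeightBelow p η)
    (hζ : IsWeightBelow p ζ) (ht0 : 0 ≤ t) (ht1 : t ≤ 1) :
    IsWeightBelow p fun x => η x + t * (ζ x - η x) := by
  refine ⟨hη.1.add (measurable_const.mul (hζ.1.sub hη.1)), fun x => ?_, fun x => ?_⟩
  · have : 0 ≤ η x := hη.2.1 x
    have : 0 ≤ ζ x := hζ.2.1 x
    show 0 ≤ η x + t * (ζ x - η x)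
    nlinarith
  · have : η x ≤ (Iic p).indicator 1 x := hη.2.2 x
    have : ζ x ≤ (Iic p).indicator 1 x := hζ.2.2 x
    show η x + t * (ζ x - η x) ≤ (Iic p).indicator 1 x
    nlinarith

theorem IsWeightBelow.indicator_sub_mul_le {q : ℝ} {η : ℝ → ℝ} (hη : IsWeightBelow q η) (x : ℝ) :
    ((Iic q).indicator 1 x - η x) * x ≤ ((Iic q).indicator 1 x - η x) * q := by
  rcases le_or_gt x q with hx | hx
  · exact mul_le_mul_of_nonneg_left hx (sub_nonneg.2 (hη.2.2 x))
  · simp [(isWeightBelow_indicator q).eq_zero_of_lt hx, hη.eq_zero_of_lt hx]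

theorem IsWeightBelow.exists_extend [IsFiniteMeasure μ] (hid : Integrable (fun x => x) μ)
    {q : ℝ} {η : ℝ → ℝ} (hη : IsWeightBelow q η) {s : ℝ} (hs : ∫ x, η x ∂μ ≤ s)
    (hsq : s ≤ μ.real (Iic q)) :
    ∃ η', IsWeightBelow q η' ∧ ∫ x, η' x ∂μ = s ∧
      ∫ x, η' x * x ∂μ ≤ ∫ x, η x * x ∂μ + (s - ∫ x, η x ∂μ) * q := by
  set g : ℝ → ℝ := (Iic q).indicator 1 with hg_def
  have hg : IsWeightBelow q g := isWeightBelow_indicator q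
  set m := ∫ x, η x ∂μ
  have hgm : ∫ x, g x ∂μ - m = μ.real (Iic q) - m := by
    rw [hg_def, integral_indicator_one measurableSet_Iic]
  set t := (s - m) / (μ.real (Iic q) - m)
  have htd : t * (μ.real (Iic q) - m) = s - m := by
    rcases eq_or_lt_of_le (show 0 ≤ μ.real (Iic q) - m by linarith) with hd | hd
    · simp only [t, ← hd, div_zero, zero_mul]; linarith
    · exact div_mul_cancel₀ _ hd.ne'
  have ht0 : 0 ≤ t := div_nonneg (by linarith) (by linarith)
  have ht1 : t ≤ 1 := div_le_one_of_le₀ (by linarith) (by linarith)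
  have hgη_int : Integrable (fun x => g x - η x) μ := hg.integrable.sub hη.integrable
  have hgηx : Integrable (fun x => (g x - η x) * x) μ := by
    simp only [sub_mul]; exact (hg.integrable_mul_id hid).sub (hη.integrable_mul_id hid)
  have hgηq : ∫ x, (g x - η x) * x ∂μ ≤ (μ.real (Iic q) - m) * q := by
    calc ∫ x, (g x - η x) * x ∂μ ≤ ∫ x, (g x - η x) * q ∂μ :=
          integral_mono hgηx (hgη_int.mul_const q) hη.indicator_sub_mul_le
      _ = (μ.real (Iic q) - m) * q := by
        rw [integral_mul_const, integral_sub hg.integrable hη.integrable, hgm]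
  refine ⟨fun x => η x + t * (g x - η x), hη.lineMap hg ht0 ht1, ?_, ?_⟩
  · beta_reduce
    rw [integral_add hη.integrable (hgη_int.const_mul t), integral_const_mul,
      integral_sub hg.integrable hη.integrable, hgm, htd]
    ring
  · simp only [add_mul, mul_assoc]
    rw [integral_add (hη.integrable_mul_id hid) (hgηx.const_mul t), integral_const_mul, ← htd,
      mul_assoc]
    gcongr

open Finset in
theorem exists_isWeightBelow_of_le_measure_Iic [IsFiniteMeasure μ]
    (hid : Integrable (fun x => x) μ) {b : ℕ → ℝ} (hb : Monotone b) {l : ℝ} (hl : 0 ≤ l) (k : ℕ)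
    (hF : ∀ i < k, (i + 1) * l ≤ μ.real (Iic (b i))) {p : ℝ} (hp : ∀ i < k, b i ≤ p) :
    ∃ η, IsWeightBelow p η ∧ ∫ x, η x ∂μ = k * l ∧
      ∫ x, η x * x ∂μ ≤ l * ∑ i ∈ range k, b i := by
  induction k generalizing p with
  | zero => exact ⟨0, ⟨measurable_const, le_rfl, indicator_nonneg (fun _ _ => zero_le_one)⟩,
      by simp, by simp⟩
  | succ k ih =>
    obtain ⟨η, hη, hη1, hηx⟩ := ih (fun i hi => hF i (by omega)) (fun i hi => hb hi.le)
    obtain ⟨η', hη', hη'1, hη'x⟩ := hη.exists_extend hid (s := (k + 1) * l)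
      (by rw [hη1]; linarith) (by exact_mod_cast hF k (by omega))
    refine ⟨η', hη'.mono (hp k (by omega)), by rw [hη'1]; push_cast; ring, ?_⟩
    rw [sum_range_succ]
    rw [hη1] at hη'x
    linarith
end Weights

section OneMax
variable {μ : Measure ℝ} {δ L U : ℝ}

theorem measurable_omsProfit (L v : ℝ) : Measurable (omsProfit L v) :=
  Measurable.ite measurableSet_Iic measurable_id measurable_const

theorem integrable_omsProfit [IsFiniteMeasure μ] (hid : Integrable (fun x => x) μ) (L v : ℝ) :
    Integrable (omsProfit L v) μ :=
  (hid.abs.add (integrable_const |L|)).mono' (measurable_omsProfit L v).aestronglyMeasurable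
    (ae_of_all _ fun x => by
      unfold omsProfit; split_ifs <;> simp [abs_nonneg])

theorem integrable_id_of_measure_compl_Icc [IsFiniteMeasure μ] (hsupp : μ (Icc L U)ᶜ = 0) :
    Integrable (fun x => x) μ :=
  Integrable.of_bound measurable_id.aestronglyMeasurable (max |L| |U|)
    (by filter_upwards [mem_ae_iff.2 hsupp] with x hx using abs_le_max_abs_abs hx.1 hx.2)

theorem le_rcvar_omsProfit [IsProbabilityMeasure μ] (hδ0 : 0 ≤ δ) (hδ1 : δ < 1)
    (hsupp : μ (Icc L U)ᶜ = 0) (v : ℝ) : L ≤ rcvar δ μ (omsProfit L v) :=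
  le_rcvar_of_ae_le hδ0 hδ1 (integrable_omsProfit (integrable_id_of_measure_compl_Icc hsupp) L v)
    (by
      filter_upwards [mem_ae_iff.2 hsupp] with x hx
      unfold omsProfit; split_ifs <;> simp [hx.1])

theorem exists_nonneg_le_mul_eq {a s c : ℝ} (ha : 0 ≤ a) (has : a ≤ s) (hc : 0 ≤ c) :
    ∃ w, 0 ≤ w ∧ w ≤ c ∧ w * s = c * a := by
  rcases eq_or_lt_of_le (ha.trans has) with hs | hs
  · exact ⟨0, le_rfl, hc, by rw [← hs, le_antisymm (hs ▸ has) ha]; simp⟩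
  · exact ⟨c * a / s, by positivity, div_le_of_le_mul₀ hs.le hc (by nlinarith),
      div_mul_cancel₀ _ hs.ne'⟩

theorem IsWeightBelow.add_indicator_Ioi_mem_Icc {v c w : ℝ} {η : ℝ → ℝ} (hη : IsWeightBelow v η)
    (hc : 0 ≤ c) (hw0 : 0 ≤ w) (hwc : w ≤ c) (x : ℝ) :
    c * η x + w * (Ioi v).indicator 1 x ∈ Icc 0 c := by
  rcases le_or_gt x v with hx | hx
  · have := mul_le_mul_of_nonneg_left (hη.le_one x) hc
    simp only [indicator_of_notMem (show x ∉ Ioi v from not_lt.2 hx), mul_zero, add_zero]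
    exact ⟨mul_nonneg hc (hη.2.1 x), by simpa using this⟩
  · simp [hη.eq_zero_of_lt hx, hx, hw0, hwc]

theorem IsWeightBelow.add_indicator_Ioi_mul_omsProfit {v c w : ℝ} {η : ℝ → ℝ}
    (hη : IsWeightBelow v η) (x : ℝ) :
    (c * η x + w * (Ioi v).indicator 1 x) * omsProfit L v x =
      c * (η x * x) + w * L * (Ioi v).indicator 1 x := by
  rcases le_or_gt x v with hx | hx
  · simp [omsProfit, hx, mul_assoc]
  · simp [omsProfit, hη.eq_zero_of_lt hx, hx, not_le.2 hx]

theorem rcvar_omsProfit_le_of_isWeightBelow [IsProbabilityMeasure μ]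
    (hid : Integrable (fun x => x) μ) (hδ : δ < 1) {v : ℝ} {η : ℝ → ℝ} (hη : IsWeightBelow v η)
    (hηv : μ.real (Iic v) ≤ δ + ∫ x, η x ∂μ) (hη1 : δ + ∫ x, η x ∂μ ≤ 1) :
    rcvar δ μ (omsProfit L v) ≤
      (1 - δ)⁻¹ * (∫ x, η x * x ∂μ + L * (1 - δ - ∫ x, η x ∂μ)) := by
  set c := (1 - δ)⁻¹
  set m := ∫ x, η x ∂μ
  have hc : 0 < c := inv_pos.2 (by linarith)
  have hc1 : c * (1 - δ) = 1 := inv_mul_cancel₀ (by linarith)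
  have hIoi : μ.real (Ioi v) = 1 - μ.real (Iic v) := by
    rw [← compl_Iic, probReal_compl_eq_one_sub measurableSet_Iic]
  obtain ⟨w, hw0, hwc, hw⟩ :=
    exists_nonneg_le_mul_eq (a := 1 - δ - m) (s := μ.real (Ioi v)) (by linarith) (by linarith) hc.le
  have hind : Integrable ((Ioi v).indicator (1 : ℝ → ℝ)) μ :=
    (integrable_const 1).indicator measurableSet_Ioi
  have hρm : Measurable fun x => c * η x + w * (Ioi v).indicator 1 x :=
    (measurable_const.mul hη.1).add
      (measurable_const.mul (measurable_one.indicator measurableSet_Ioi))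
  have hρ1 : ∫ x, c * η x + w * (Ioi v).indicator 1 x ∂μ = 1 := by
    rw [integral_add (hη.integrable.const_mul c) (hind.const_mul w), integral_const_mul,
      integral_const_mul, integral_indicator_one measurableSet_Ioi, hw]
    linear_combination hc1
  have hρ := hη.add_indicator_Ioi_mem_Icc hc.le hw0 hwc
  calc rcvar δ μ (omsProfit L v)
      ≤ ∫ x, (c * η x + w * (Ioi v).indicator 1 x) * omsProfit L v x ∂μ :=
        rcvar_le_integral_mul (integrable_omsProfit hid L v) hρm (fun x => (hρ x).1)
          (fun x => (hρ x).2) hρ1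
    _ = c * ∫ x, η x * x ∂μ + w * μ.real (Ioi v) * L := by
        simp_rw [hη.add_indicator_Ioi_mul_omsProfit]
        rw [integral_add ((hη.integrable_mul_id hid).const_mul c) (hind.const_mul _),
          integral_const_mul, integral_const_mul, integral_indicator_one measurableSet_Ioi]
        ring
    _ = c * (∫ x, η x * x ∂μ + L * (1 - δ - m)) := by rw [hw]; ring

open Finset in
theorem rcvar_omsProfit_le [IsProbabilityMeasure μ] (hid : Integrable (fun x => x) μ)
    (hδ : δ < 1) {b : ℕ → ℝ} (hb : Monotone b) {l : ℝ} (hl : 0 ≤ l) {k : ℕ}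
    (hkl : δ + k * l ≤ 1) (hF : ∀ i < k, (i + 1) * l ≤ μ.real (Iic (b i))) {v : ℝ}
    (hbv : ∀ i < k, b i ≤ v) (hv : μ.real (Iic v) ≤ δ + k * l) :
    rcvar δ μ (omsProfit L v) ≤ (1 - δ)⁻¹ * (L * (1 - δ - k * l) + l * ∑ i ∈ range k, b i) := by
  obtain ⟨η, hη, hη1, hηx⟩ := exists_isWeightBelow_of_le_measure_Iic hid hb hl k hF hbv
  have hc : 0 < (1 - δ)⁻¹ := inv_pos.2 (by linarith)
  calc rcvar δ μ (omsProfit L v)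
      ≤ (1 - δ)⁻¹ * (∫ x, η x * x ∂μ + L * (1 - δ - ∫ x, η x ∂μ)) :=
        rcvar_omsProfit_le_of_isWeightBelow hid hδ hη (hη1 ▸ hv) (hη1 ▸ hkl)
    _ ≤ (1 - δ)⁻¹ * (L * (1 - δ - k * l) + l * ∑ i ∈ range k, b i) := by
        rw [hη1]; exact mul_le_mul_of_nonneg_left (by linarith) hc.le

theorem omsRatio_le_omsCR [IsProbabilityMeasure μ] (hδ0 : 0 ≤ δ) (hδ1 : δ < 1) (hL : 0 < L)
    (hsupp : μ (Icc L U)ᶜ = 0) {v : ℝ} (hv : v ∈ Icc L U) :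
    omsRatio δ L μ v ≤ omsCR δ L U μ := by
  refine le_ciSup (f := fun w : Icc L U => omsRatio δ L μ w)
    ⟨U / L, forall_mem_range.2 fun w => ?_⟩ ⟨v, hv⟩
  exact div_le_div₀ (hL.le.trans (w.2.1.trans w.2.2)) w.2.2 hL
    (le_rcvar_omsProfit hδ0 hδ1 hsupp w)

theorem le_omsOpt (hLU : L ≤ U) {r : ℝ}
    (h : ∀ μ : Measure ℝ, IsProbabilityMeasure μ → μ (Icc L U)ᶜ = 0 → r ≤ omsCR δ L U μ) :
    r ≤ omsOpt δ L U := by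
  have : Nonempty {m : Measure ℝ // IsProbabilityMeasure m ∧ m (Icc L U)ᶜ = 0} :=
    ⟨⟨Measure.dirac L, inferInstance, by simp [hLU]⟩⟩
  exact le_ciInf fun m => h m.1 m.2.1 m.2.2

theorem lt_mul_rcvar_of_omsCR_lt [IsProbabilityMeasure μ] (hδ0 : 0 ≤ δ) (hδ1 : δ < 1)
    (hL : 0 < L) (hsupp : μ (Icc L U)ᶜ = 0) {β : ℝ} (hβ : omsCR δ L U μ < β) {v : ℝ}
    (hv : v ∈ Icc L U) : v < β * rcvar δ μ (omsProfit L v) :=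
  (div_lt_iff₀ (hL.trans_le (le_rcvar_omsProfit hδ0 hδ1 hsupp v))).1
    ((omsRatio_le_omsCR hδ0 hδ1 hL hsupp hv).trans_lt hβ)
end OneMax

section Threshold
open Finset

noncomputable def omsThreshold (L β : ℝ) (n k : ℕ) : ℝ := L + (β - 1) * L * (1 + β / n) ^ k

variable {L β : ℝ} {n : ℕ}

theorem omsThreshold_eq_mul_sum (k : ℕ) :
    omsThreshold L β n k = β * (L * (1 - k / n) + (∑ i ∈ range k, omsThreshold L β n i) / n) := by
  induction k with
  | zero => simp only [omsThreshold]; simp; ring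
  | succ k ih =>
    rw [sum_range_succ]
    simp only [omsThreshold] at ih ⊢
    push_cast
    linear_combination ih

theorem le_omsThreshold (hL : 0 ≤ L) (hβ : 1 ≤ β) (k : ℕ) : L ≤ omsThreshold L β n k := by
  have : 0 ≤ (β - 1) * L * (1 + β / n) ^ k := by
    have : 0 ≤ β / n := by positivity
    have : 0 ≤ β - 1 := by linarith
    positivity
  unfold omsThreshold; linarith

theorem monotone_omsThreshold (hL : 0 ≤ L) (hβ : 1 ≤ β) : Monotone (omsThreshold L β n) := by
  intro i j hij
  have : 0 ≤ β - 1 := by linarith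
  have : 0 ≤ β / n := by positivity
  have : 1 ≤ 1 + β / n := by linarith
  unfold omsThreshold; gcongr
end Threshold

open Finset in
theorem mul_rcvar_omsProfit_le_omsThreshold {μ : Measure ℝ} [IsProbabilityMeasure μ]
    {δ L β : ℝ} {n k : ℕ} (hid : Integrable (fun x => x) μ) (hL : 0 ≤ L) (hβ : 1 ≤ β)
    (hδ : δ < 1) (hkn : k ≤ n) {v : ℝ} (hv : μ.real (Iic v) ≤ δ + k * ((1 - δ) / n))
    (hbv : ∀ i < k, omsThreshold L β n i ≤ v)
    (hF : ∀ i < k, (i + 1) * ((1 - δ) / n) ≤ μ.real (Iic (omsThreshold L β n i))) :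
    β * rcvar δ μ (omsProfit L v) ≤ omsThreshold L β n k := by
  have h1δ : 1 - δ ≠ 0 := by linarith
  have hkl : δ + k * ((1 - δ) / n) ≤ 1 := by
    have : (k : ℝ) / n ≤ 1 := div_le_one_of_le₀ (by exact_mod_cast hkn) (Nat.cast_nonneg n)
    rw [show (k : ℝ) * ((1 - δ) / n) = k / n * (1 - δ) by ring]
    nlinarith
  calc β * rcvar δ μ (omsProfit L v)
      ≤ β * ((1 - δ)⁻¹ * (L * (1 - δ - k * ((1 - δ) / n)) +
          (1 - δ) / n * ∑ i ∈ range k, omsThreshold L β n i)) := by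
        gcongr
        exact rcvar_omsProfit_le hid hδ (monotone_omsThreshold hL hβ)
          (div_nonneg (by linarith) (Nat.cast_nonneg n)) hkl hF hbv hv
    _ = omsThreshold L β n k := by
        rw [omsThreshold_eq_mul_sum]
        field_simp

theorem lt_omsThreshold_of_forall_lt_mul_rcvar {μ : Measure ℝ} [IsProbabilityMeasure μ]
    {δ L U β : ℝ} {n : ℕ} (hid : Integrable (fun x => x) μ) (hL : 0 ≤ L) (hLU : L ≤ U)
    (hδ : δ < 1) (hn : 0 < n) (hnδ : 1 ≤ (n + 1) * δ) (hβ : 1 ≤ β)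
    (hlt : ∀ v ∈ Icc L U, v < β * rcvar δ μ (omsProfit L v)) :
    U < omsThreshold L β n n := by
  set b := omsThreshold L β n
  have hb := monotone_omsThreshold (n := n) hL hβ
  set l := (1 - δ) / n
  have hn0 : (0 : ℝ) < n := by exact_mod_cast hn
  have hlδ : l ≤ δ := by rw [div_le_iff₀ hn0]; linarith
  have hnl : (n : ℝ) * l = 1 - δ := by simp only [l]; field_simp
  have forced : ∀ i ≤ n, b i ≤ U → δ + i * l ≤ μ.real (Iic (b i)) := by
    intro i
    induction i using Nat.strong_induction_on with
    | _ i ih =>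
      intro hin hiU
      by_contra! hF
      refine lt_irrefl (b i) ((hlt (b i) ⟨le_omsThreshold hL hβ i, hiU⟩).trans_le
        (mul_rcvar_omsProfit_le_omsThreshold hid hL hβ hδ hin hF.le (fun j hj => hb hj.le)
          fun j hj => ?_))
      have := ih j hj (by omega) ((hb hj.le).trans hiU)
      linarith
  by_cases hall : ∀ i < n, b i ≤ U
  · refine (hlt U ⟨hLU, le_rfl⟩).trans_le (mul_rcvar_omsProfit_le_omsThreshold hid hL hβ hδ le_rfl
      (by rw [hnl]; simp [measureReal_le_one]) hall fun i hi => ?_)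
    have := forced i hi.le (hall i hi)
    linarith
  · push Not at hall
    obtain ⟨i, hi, hUi⟩ := hall
    exact hUi.trans_le (hb hi.le)

section Parameters
variable {δ : ℝ} {n : ℕ}

theorem one_le_add_one_mul_of_eq_max_ceil (hδ : 0 < δ) (hn : n = max 1 (⌈1/δ⌉₊ - 1)) :
    1 ≤ ((n : ℝ) + 1) * δ := by
  have hceil : (⌈1/δ⌉₊ : ℝ) ≤ n + 1 := by exact_mod_cast (show ⌈1/δ⌉₊ ≤ n + 1 by omega)
  have := Nat.le_ceil (1 / δ)
  rw [div_le_iff₀ hδ] at this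
  nlinarith

theorem eq_one_of_eq_max_ceil (hδ : 1 / 2 ≤ δ) (hn : n = max 1 (⌈1/δ⌉₊ - 1)) : n = 1 := by
  have : ⌈1/δ⌉₊ ≤ 2 := Nat.ceil_le.2 (by rw [div_le_iff₀ (by linarith)]; push_cast; linarith)
  omega

theorem one_le_of_sub_one_mul_pow_eq {r θ : ℝ} (hr : 0 < r) (hθ : 1 ≤ θ)
    (hroot : (r - 1) * (1 + r / n) ^ n = θ - 1) : 1 ≤ r := by
  by_contra! h
  have : 0 < (1 + r / n) ^ n := by positivity
  nlinarith
end Parameters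

/-- Theorem 9: lower bound for one-max search. With `n = max{1, ⌈1/δ⌉ - 1}` and `r` the
unique positive root of `(r-1)(1+r/n)^n = θ-1`, every random threshold algorithm has
`δ`-CVaR competitive ratio at least `r`; hence `α_δ^{θ,*} ≥ r`, and `α_δ^{θ,*} ≥ √θ`
whenever `δ ≥ 1/2`. -/
theorem oms_lower_bound (δ : ℝ) (hδ : δ ∈ Ioo (0:ℝ) 1) (L U : ℝ) (hL : 0 < L)
    (hLU : L ≤ U) (θ : ℝ) (hθ : θ = U / L)
    (n : ℕ) (hn : n = max 1 (⌈1/δ⌉₊ - 1))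
    (r : ℝ) (hr : 0 < r) (hroot : (r - 1) * (1 + r / n) ^ n = θ - 1) :
    (∀ μ : Measure ℝ, IsProbabilityMeasure μ → μ (Icc L U)ᶜ = 0 →
        r ≤ omsCR δ L U μ) ∧
    r ≤ omsOpt δ L U ∧
    (1 / 2 ≤ δ → Real.sqrt θ ≤ omsOpt δ L U) := by
  obtain ⟨hδ0, hδ1⟩ := hδ
  have hr1 : 1 ≤ r := one_le_of_sub_one_mul_pow_eq hr (hθ ▸ (one_le_div hL).2 hLU) hroot
  have hCR : ∀ μ : Measure ℝ, IsProbabilityMeasure μ → μ (Icc L U)ᶜ = 0 → r ≤ omsCR δ L U μ := by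
    intro μ _ hsupp
    by_contra! hlt
    have hU := lt_omsThreshold_of_forall_lt_mul_rcvar (integrable_id_of_measure_compl_Icc hsupp)
      hL.le hLU hδ1 (hn ▸ lt_max_of_lt_left one_pos) (one_le_add_one_mul_of_eq_max_ceil hδ0 hn)
      hr1 fun v => lt_mul_rcvar_of_omsCR_lt hδ0.le hδ1 hL hsupp hlt
    rw [omsThreshold, mul_right_comm, hroot, hθ] at hU
    field_simp at hU
    linarith
  refine ⟨hCR, le_omsOpt hLU hCR, fun hδ2 => ?_⟩
  obtain rfl := eq_one_of_eq_max_ceil hδ2 hn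
  have hsq : Real.sqrt θ = r := by
    rw [Real.sqrt_eq_iff_mul_self_eq_of_pos hr]
    simp at hroot
    linarith
  exact hsq ▸ le_omsOpt hLU hCR
end

section
/- Let C ≥ 1 and n > 0 be real numbers. Then for all x ∈ [0, nC], e^{(log(1+C)/C)·x} ≤ (1 + x/n)^n ≤ e^{x − ((C − log(1+C))/C²)·x²/n}. -/
/-!
Put `t = x / n ∈ [0, C]`, so that `(1 + x/n)^n = exp (n log (1 + t))`. Both bounds are chord
inequalities `g C' / C' * s ≤ g s` (for `0 ≤ s ≤ C'`) of concave functions with `g 0 = 0`: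
the lower one for `g s = log (1 + s)` on `[0, C]`, the upper one for
`g u = √u - log (1 + √u)` on `[0, C²]` at `u = t²`, which is concave because its derivative
`1 / (2 (1 + √u))` decreases.
-/

open Real Set

theorem ConcaveOn.div_mul_le {s : Set ℝ} {g : ℝ → ℝ} {b t : ℝ} (hg : ConcaveOn ℝ s g)
    (h0 : 0 ∈ s) (hb : b ∈ s) (hg0 : 0 ≤ g 0) (ht₀ : 0 ≤ t) (htb : t ≤ b) :
    g b / b * t ≤ g t := by
  have hw₁ : 0 ≤ 1 - t / b := sub_nonneg.2 (div_le_one_of_le₀ htb (ht₀.trans htb))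
  have hw : t / b * b = t := div_mul_cancel_of_imp fun hb₀ ↦ le_antisymm (hb₀ ▸ htb) ht₀
  have hchord := hg.2 h0 hb hw₁ (div_nonneg ht₀ (ht₀.trans htb)) (sub_add_cancel 1 (t / b))
  simp only [smul_eq_mul, mul_zero, zero_add, hw] at hchord
  calc g b / b * t = t / b * g b := by ring
    _ ≤ (1 - t / b) * g 0 + t / b * g b := le_add_of_nonneg_left (mul_nonneg hw₁ hg0)
    _ ≤ g t := hchord

theorem concaveOn_log_one_add : ConcaveOn ℝ (Ioi (-1)) fun s ↦ log (1 + s) := by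
  have h := strictConcaveOn_log_Ioi.concaveOn.translate_right 1
  have hdom : (fun z ↦ 1 + z) ⁻¹' Ioi 0 = Ioi (-1 : ℝ) := by
    ext; simp [neg_lt_iff_pos_add']
  rwa [hdom] at h

theorem hasDerivAt_sqrt_sub_log_one_add_sqrt {s : ℝ} (hs : 0 < s) :
    HasDerivAt (fun u ↦ √u - log (1 + √u)) (1 / (2 * (1 + √s))) s := by
  have hsqrt := hasDerivAt_sqrt hs.ne'
  have hpos : 0 < 1 + √s := by positivity
  have : √s ≠ 0 := (sqrt_pos.2 hs).ne'
  refine (hsqrt.sub ((hsqrt.const_add 1).log hpos.ne')).congr_deriv ?_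
  field_simp
  ring

theorem concaveOn_sqrt_sub_log_one_add_sqrt :
    ConcaveOn ℝ (Ici 0) fun u ↦ √u - log (1 + √u) := by
  have hderiv : ∀ s ∈ interior (Ici (0 : ℝ)),
      HasDerivAt (fun u ↦ √u - log (1 + √u)) (1 / (2 * (1 + √s))) s := by
    rw [interior_Ici]
    exact fun s hs ↦ hasDerivAt_sqrt_sub_log_one_add_sqrt hs
  have hlog : ContinuousOn (fun u ↦ log (1 + √u)) (Ici 0) :=
    ContinuousOn.log (by fun_prop) fun u _ ↦ (by positivity : 0 < 1 + √u).ne'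
  refine AntitoneOn.concaveOn_of_deriv (convex_Ici 0) (continuous_sqrt.continuousOn.sub hlog)
    (fun s hs ↦ (hderiv s hs).differentiableAt.differentiableWithinAt) ?_
  intro s hs u hu hsu
  rw [(hderiv s hs).deriv, (hderiv u hu).deriv]
  gcongr

theorem div_mul_le_log_one_add {C t : ℝ} (ht₀ : 0 ≤ t) (htC : t ≤ C) :
    log (1 + C) / C * t ≤ log (1 + t) :=
  concaveOn_log_one_add.div_mul_le (by norm_num) (mem_Ioi.2 (by linarith)) (by simp) ht₀ htC

theorem log_one_add_le_sub_mul_sq {C t : ℝ} (ht₀ : 0 ≤ t) (htC : t ≤ C) :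
    log (1 + t) ≤ t - (C - log (1 + C)) / C ^ 2 * t ^ 2 := by
  have hchord := concaveOn_sqrt_sub_log_one_add_sqrt.div_mul_le self_mem_Ici
    (sq_nonneg C) (by simp) (sq_nonneg t) (pow_le_pow_left₀ ht₀ htC 2)
  simp only [sqrt_sq ht₀, sqrt_sq (ht₀.trans htC)] at hchord
  linarith

theorem exponential_inequalities_general (C n : ℝ) (hn : 0 < n) :
    ∀ x ∈ Icc (0:ℝ) (n * C),
      Real.exp (Real.log (1 + C) / C * x) ≤ (1 + x / n) ^ n ∧
      (1 + x / n) ^ n ≤ Real.exp (x - (C - Real.log (1 + C)) / C ^ 2 * x ^ 2 / n) := by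
  rintro x ⟨hx₀, hxC⟩
  have ht₀ : 0 ≤ x / n := div_nonneg hx₀ hn.le
  have htC : x / n ≤ C := (div_le_iff₀ hn).2 (by linarith)
  rw [rpow_def_of_pos (by linarith), exp_le_exp, exp_le_exp]
  constructor
  · calc log (1 + C) / C * x = log (1 + C) / C * (x / n) * n := by field_simp
      _ ≤ log (1 + x / n) * n := by gcongr; exact div_mul_le_log_one_add ht₀ htC
  · calc log (1 + x / n) * n ≤ (x / n - (C - log (1 + C)) / C ^ 2 * (x / n) ^ 2) * n := by
          gcongr; exact log_one_add_le_sub_mul_sq ht₀ htC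
      _ = x - (C - log (1 + C)) / C ^ 2 * x ^ 2 / n := by field_simp

/-- Lemma 13: for `C ≥ 1`, `n > 0` and `x ∈ [0, nC]`,
`e^{(log(1+C)/C) x} ≤ (1 + x/n)^n ≤ e^{x - ((C - log(1+C))/C²) x²/n}`,
where the middle power is the real power with base `1 + x/n` and exponent `n`. -/
theorem exponential_inequalities (C n : ℝ) (hC : 1 ≤ C) (hn : 0 < n) :
    ∀ x ∈ Icc (0:ℝ) (n * C),
      Real.exp (Real.log (1 + C) / C * x) ≤ (1 + x / n) ^ n ∧
      (1 + x / n) ^ n ≤ Real.exp (x - (C - Real.log (1 + C)) / C ^ 2 * x ^ 2 / n) :=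
  exponential_inequalities_general C n hn
end
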